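/- Let x and s be block vectors of rank r with x, s ∈ int 𝓛, and let ν > 0. Then the duality gap and the distance from the central path satisfy | xᵀs − rν | ≤ √(r/2) · d(x, s, ν), where xᵀs denotes the Euclidean inner product of the concatenated vectors. -/

import Mathlib

/-!
The matrix `Arw y` is symmetric with first row `yᵀ` and `Arw y v = y ∘ v`, so the first row of
`Q_y = 2 Arw(y)² − Arw(y ∘ y)` is `(y ∘ y)ᵀ`. As `x^{1/2} ∘ x^{1/2} = x` on the Lorentz cone, the
leading entry of the `i`-th block of `w := T_x s − ν e` is `x_iᵀ s_i − ν`, and these entries sum to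
`xᵀs − rν`. Cauchy–Schwarz over the `r` blocks and `λ₁(w_i)² + λ₂(w_i)² = 2 (w_{i,0}² + ‖w̄_i‖²)`
then give `(xᵀs − rν)² ≤ r · Σ w_{i,0}² ≤ (r/2) ‖w‖_F²`.
-/

set_option synthInstance.maxHeartbeats 1000000
set_option maxHeartbeats 1000000

noncomputable section
open scoped BigOperators

namespace SOCP

/-- `E k` is `ℝ^(k+1)`, written as `(x₀; x̄)` with `x̄ ∈ ℝ^k`. -/
abbrev E (k : ℕ) := EuclideanSpace ℝ (Fin (k + 1))

/-- Build an element of `E k` from a plain function. -/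
def mk {k : ℕ} (f : Fin (k + 1) → ℝ) : E k := (WithLp.equiv 2 _).symm f

/-- The Euclidean norm `‖x̄‖` of the tail of `x`. -/
def tnorm {k : ℕ} (x : E k) : ℝ := Real.sqrt (∑ i : Fin k, (x i.succ) ^ 2)

/-- First Jordan eigenvalue `λ₁(x) = x₀ + ‖x̄‖`. -/
def lam1 {k : ℕ} (x : E k) : ℝ := x 0 + tnorm x

/-- Second Jordan eigenvalue `λ₂(x) = x₀ − ‖x̄‖`. -/
def lam2 {k : ℕ} (x : E k) : ℝ := x 0 - tnorm x

/-- Jordan product `x ∘ y = (xᵀy; x₀ȳ + y₀x̄)`. -/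
def jmul {k : ℕ} (x y : E k) : E k :=
  mk (fun j => if j = 0 then ∑ i, x i * y i else x 0 * y j + y 0 * x j)

/-- The Jordan identity `e = (1; 0)`. -/
def idE {k : ℕ} : E k := mk (fun j => if j = 0 then 1 else 0)

/-- First Jordan frame vector `c₁(x) = ½(1; x̄/‖x̄‖)`. -/
def c1 {k : ℕ} (x : E k) : E k :=
  mk (fun j => if j = 0 then 1 / 2 else x j / (2 * tnorm x))

/-- Second Jordan frame vector `c₂(x) = ½(1; −x̄/‖x̄‖)`. -/
def c2 {k : ℕ} (x : E k) : E k :=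
  mk (fun j => if j = 0 then 1 / 2 else -x j / (2 * tnorm x))

/-- Arrowhead matrix `Arw(x) = [[x₀, x̄ᵀ], [x̄, x₀ I]]`. -/
def Arw {k : ℕ} (x : E k) : Matrix (Fin (k + 1)) (Fin (k + 1)) ℝ :=
  Matrix.of fun i j =>
    if i = 0 then x j else if j = 0 then x i else if i = j then x 0 else 0

/-- Quadratic representation `Q_x = 2 Arw(x)² − Arw(x ∘ x)`. -/
def Qmat {k : ℕ} (x : E k) : Matrix (Fin (k + 1)) (Fin (k + 1)) ℝ :=
  (2 : ℝ) • (Arw x * Arw x) - Arw (jmul x x)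

/-- Jordan square root `x^{1/2} = √λ₁ c₁ + √λ₂ c₂` (equal to `(√x₀; 0)` when `x̄ = 0`). -/
def jsqrt {k : ℕ} (x : E k) : E k :=
  if tnorm x = 0 then mk (fun j => if j = 0 then Real.sqrt (x 0) else 0)
  else Real.sqrt (lam1 x) • c1 x + Real.sqrt (lam2 x) • c2 x

/-- `T_x := Q_{x^{1/2}}`. -/
def Tmat {k : ℕ} (x : E k) : Matrix (Fin (k + 1)) (Fin (k + 1)) ℝ := Qmat (jsqrt x)

/-- Jordan inverse `x⁻¹ = λ₁⁻¹ c₁ + λ₂⁻¹ c₂` (equal to `(x₀⁻¹; 0)` when `x̄ = 0`). -/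
def jinv {k : ℕ} (x : E k) : E k :=
  if tnorm x = 0 then mk (fun j => if j = 0 then (x 0)⁻¹ else 0)
  else (lam1 x)⁻¹ • c1 x + (lam2 x)⁻¹ • c2 x

/-- Matrix-vector product, as a map on `E k`. -/
def mulVecE {k : ℕ} (M : Matrix (Fin (k + 1)) (Fin (k + 1)) ℝ) (v : E k) : E k :=
  mk (M.mulVec (WithLp.equiv 2 _ v))

/-- Block vectors `x = (x₁; …; x_r)` with `x_i ∈ ℝ^{d i + 2}` (so each block has dim ≥ 2). -/
abbrev BV {r : ℕ} (d : Fin r → ℕ) : Type := (i : Fin r) → E (d i + 1)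

variable {r : ℕ} {d : Fin r → ℕ}

/-- Spectral norm `‖x‖₂ = max_i (|x_{i,0}| + ‖x̄_i‖)`. -/
def specNorm (x : BV d) : ℝ := ⨆ i, (|x i 0| + tnorm (x i))

/-- Frobenius norm `‖x‖_F = √(Σ_i (λ₁(x_i)² + λ₂(x_i)²))`. -/
def frobNorm (x : BV d) : ℝ := Real.sqrt (∑ i, (lam1 (x i) ^ 2 + lam2 (x i) ^ 2))

/-- Minimum Jordan eigenvalue `λ_min(x) = min_i λ₂(x_i)`. -/
def lamMin (x : BV d) : ℝ := ⨅ i, lam2 (x i)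

/-- Blockwise Jordan product. -/
def jmulB (x y : BV d) : BV d := fun i => jmul (x i) (y i)

/-- Block identity element. -/
def idB : BV d := fun _ => idE

/-- Membership in the interior of the product of Lorentz cones: `‖x̄_i‖ < x_{i,0}` for all `i`. -/
def inIntLB (x : BV d) : Prop := ∀ i, tnorm (x i) < x i 0

/-- Euclidean inner product of the concatenated vectors. -/
def ip (x y : BV d) : ℝ := ∑ i, ∑ j, x i j * y i j

/-- Block-diagonal application of `T_x`: `(T_x s)_i = T_{x_i} s_i`. -/
def TB (x s : BV d) : BV d := fun i => mulVecE (Tmat (x i)) (s i)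

/-- Distance from the central path `d(x, s, ν) = ‖T_x s − ν e‖_F`. -/
def cdist (x s : BV d) (ν : ℝ) : ℝ := frobNorm (TB x s - ν • (idB : BV d))

/-- Blockwise Jordan inverse. -/
def jinvB (x : BV d) : BV d := fun i => jinv (x i)


@[simp] lemma mk_apply {k : ℕ} (f : Fin (k + 1) → ℝ) (j : Fin (k + 1)) : mk f j = f j := rfl

lemma tnorm_nonneg {k : ℕ} (x : E k) : 0 ≤ tnorm x := Real.sqrt_nonneg _

lemma tnorm_sq {k : ℕ} (x : E k) : tnorm x ^ 2 = ∑ i : Fin k, x i.succ ^ 2 :=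
  Real.sq_sqrt (by positivity)

lemma apply_succ_eq_zero_of_tnorm_eq_zero {k : ℕ} {x : E k} (h : tnorm x = 0) (i : Fin k) :
    x i.succ = 0 := by
  have hsum : ∑ i : Fin k, x i.succ ^ 2 = 0 := by rw [← tnorm_sq, h, sq, zero_mul]
  exact pow_eq_zero_iff two_ne_zero |>.mp <|
    (Finset.sum_eq_zero_iff_of_nonneg fun i _ => sq_nonneg _).mp hsum i (Finset.mem_univ i)

lemma lam1_sq_add_lam2_sq {k : ℕ} (x : E k) :
    lam1 x ^ 2 + lam2 x ^ 2 = 2 * (x 0 ^ 2 + tnorm x ^ 2) := by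
  unfold lam1 lam2; ring

section Arw

variable {k : ℕ} (y : E k)

lemma Arw_zero_apply (j : Fin (k + 1)) : Arw y 0 j = y j := rfl

lemma Arw_comm (i j : Fin (k + 1)) : Arw y i j = Arw y j i := by
  simp only [Arw, Matrix.of_apply]
  by_cases hi : i = 0 <;> by_cases hj : j = 0 <;> simp [hi, hj, eq_comm]

lemma Arw_mulVec (v : E k) (j : Fin (k + 1)) : (Arw y).mulVec (WithLp.ofLp v) j = jmul y v j := by
  simp only [Matrix.mulVec, dotProduct, jmul, mk_apply]
  rcases Fin.eq_zero_or_eq_succ j with rfl | ⟨i, rfl⟩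
  · simp [Arw_zero_apply]
  · rw [Fin.sum_univ_succ]
    simp [Arw, Fin.succ_ne_zero, Fin.succ_inj, add_comm, mul_comm]

lemma Qmat_zero_apply (j : Fin (k + 1)) : Qmat y 0 j = jmul y y j := by
  have hrow : (Arw y * Arw y) 0 j = jmul y y j := by
    rw [Matrix.mul_apply, ← Arw_mulVec]
    simp only [Matrix.mulVec, dotProduct, Arw_zero_apply, Arw_comm y _ j, mul_comm]
  simp [Qmat, hrow, Arw_zero_apply, two_mul]

lemma mulVecE_Qmat_zero (s : E k) : mulVecE (Qmat y) s 0 = ∑ j, jmul y y j * s j := by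
  simp [mulVecE, Matrix.mulVec, dotProduct, Qmat_zero_apply]

end Arw

section Sqrt

variable {k : ℕ} {x : E k}

lemma jsqrt_apply_of_tnorm_ne_zero (ht : tnorm x ≠ 0) (j : Fin (k + 1)) :
    jsqrt x j = if j = 0 then (√(lam1 x) + √(lam2 x)) / 2
      else (√(lam1 x) - √(lam2 x)) / (2 * tnorm x) * x j := by
  simp only [jsqrt, if_neg ht, PiLp.add_apply, PiLp.smul_apply, c1, c2, mk_apply, smul_eq_mul]
  split_ifs <;> ring

lemma jmul_jsqrt_self (hx : tnorm x ≤ x 0) : jmul (jsqrt x) (jsqrt x) = x := by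
  ext j
  by_cases ht : tnorm x = 0
  · rcases Fin.eq_zero_or_eq_succ j with rfl | ⟨i, rfl⟩
    · simp [jmul, jsqrt, ht, Real.mul_self_sqrt (ht ▸ hx : (0 : ℝ) ≤ x 0)]
    · simp [jmul, jsqrt, ht, Fin.succ_ne_zero, apply_succ_eq_zero_of_tnorm_eq_zero ht]
  have ha : √(lam1 x) ^ 2 = x 0 + tnorm x :=
    Real.sq_sqrt (by unfold lam1; linarith [tnorm_nonneg x])
  have hb : √(lam2 x) ^ 2 = x 0 - tnorm x := Real.sq_sqrt (by unfold lam2; linarith)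
  rcases Fin.eq_zero_or_eq_succ j with rfl | ⟨i, rfl⟩
  · have htail : ∑ i : Fin k, jsqrt x i.succ * jsqrt x i.succ
        = ((√(lam1 x) - √(lam2 x)) / (2 * tnorm x)) ^ 2 * tnorm x ^ 2 := by
      simp only [jsqrt_apply_of_tnorm_ne_zero ht, Fin.succ_ne_zero, if_false, tnorm_sq,
        Finset.mul_sum]
      exact Finset.sum_congr rfl fun i _ => by ring
    simp only [jmul, mk_apply, if_true]
    rw [Fin.sum_univ_succ, htail, jsqrt_apply_of_tnorm_ne_zero ht, if_pos rfl]
    field_simp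
    linear_combination 2 * (ha + hb)
  · simp only [jmul, mk_apply, Fin.succ_ne_zero, if_false,
      jsqrt_apply_of_tnorm_ne_zero ht, if_true]
    field_simp
    linear_combination (2 * x i.succ) * (ha - hb)

end Sqrt

lemma mulVecE_Tmat_zero {k : ℕ} {x : E k} (hx : tnorm x ≤ x 0) (s : E k) :
    mulVecE (Tmat x) s 0 = ∑ j, x j * s j := by
  rw [Tmat, mulVecE_Qmat_zero, jmul_jsqrt_self hx]

lemma abs_sum_apply_zero_le_frobNorm (w : BV d) :
    |∑ i, w i 0| ≤ √(r / 2) * frobNorm w := by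
  rw [frobNorm, ← Real.sqrt_mul (by positivity)]
  refine Real.abs_le_sqrt ?_
  calc (∑ i, w i 0) ^ 2 ≤ r * ∑ i, w i 0 ^ 2 := by
        simpa using sq_sum_le_card_mul_sum_sq (s := Finset.univ) (f := fun i => w i 0)
    _ = r / 2 * ∑ i, 2 * w i 0 ^ 2 := by rw [← Finset.mul_sum]; ring
    _ ≤ r / 2 * ∑ i, (lam1 (w i) ^ 2 + lam2 (w i) ^ 2) := by
        gcongr with i
        rw [lam1_sq_add_lam2_sq]
        linarith [sq_nonneg (tnorm (w i))]

lemma sum_TB_sub_smul_idB_apply_zero {x : BV d} (hx : inIntLB x) (s : BV d) (ν : ℝ) :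
    ∑ i, (TB x s - ν • (idB : BV d)) i 0 = ip x s - r * ν := by
  simp [TB, idB, idE, ip, mulVecE_Tmat_zero (hx _).le, Finset.sum_sub_distrib]

theorem gap_vs_central_path_distance_general {r : ℕ} {d : Fin r → ℕ}
    (x s : BV d) (hx : inIntLB x) (ν : ℝ) :
    |ip x s - r * ν| ≤ Real.sqrt (r / 2) * cdist x s ν := by
  rw [← sum_TB_sub_smul_idB_apply_zero hx s ν]
  exact abs_sum_apply_zero_le_frobNorm (TB x s - ν • (idB : BV d))

/-- For strictly feasible block vectors `x, s` of rank `r` and `ν > 0`,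
`|xᵀs − rν| ≤ √(r/2) · d(x, s, ν)`. -/
theorem gap_vs_central_path_distance {r : ℕ} {d : Fin r → ℕ} (hr : 0 < r)
    (x s : BV d) (hx : inIntLB x) (hs : inIntLB s) (ν : ℝ) (hν : 0 < ν) :
    |ip x s - r * ν| ≤ Real.sqrt (r / 2) * cdist x s ν :=
  gap_vs_central_path_distance_general x s hx ν

end SOCP
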